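/- Let C be a nonempty closed convex subset of ℝ^K with diameter F := max_{x,y∈C} ‖x−y‖ < ∞. Let h_1, h_2, … be convex differentiable functions on C with ‖∇h_t(x)‖ ≤ H for all x ∈ C and all t. Define the online projected gradient iterates x_1 ∈ C and x_{t} = Π_C[x_{t−1} − (1/√(t−1)) ∇h_{t−1}(x_{t−1})] for t ≥ 2, where Π_C is the Euclidean projection onto C. Then for all T, the regret satisfies Σ_{t=1}^T h_t(x_t) − min_{x∈C} Σ_{t=1}^T h_t(x) ≤ (F²/2 + H²) √T. -/

import Mathlib

/-!
Convexity bounds the regret of round `t` against `z ∈ C` by the linearisation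
`⟪∇h_t(x_t), x_t - z⟫`. Projecting onto `C` does not increase the distance to `z`, so expanding
`‖x_t - η ∇h_t(x_t) - z‖²` with `η = 1/√t` bounds this by
`(√t/2)(‖x_t - z‖² - ‖x_{t+1} - z‖²) + H²/(2√t)`. Summed over `t ≤ T`, the first terms telescope
against the increasing weights `√t/2` to at most `(F²/2)√T`, and `∑_{t ≤ T} 1/√t ≤ 2√T`.
-/

open Finset RealInnerProductSpace

section FirstOrder

variable {E : Type*} [NormedAddCommGroup E] [NormedSpace ℝ E]

theorem ConvexOn.add_fderiv_sub_le {C : Set E} {f : E → ℝ} {f' : E →L[ℝ] ℝ} {u z : E}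
    (hf : ConvexOn ℝ C f) (hu : u ∈ C) (hz : z ∈ C) (hf' : HasFDerivAt f f' u) :
    f u + f' (z - u) ≤ f z := by
  set φ : ℝ →ᵃ[ℝ] E := AffineMap.lineMap u z
  have hφ0 : φ 0 = u := AffineMap.lineMap_apply_zero u z
  have hφ1 : φ 1 = z := AffineMap.lineMap_apply_one u z
  have hderiv : HasDerivAt (f ∘ φ) (f' (z - u)) 0 :=
    (hφ0 ▸ hf').comp_hasDerivAt 0 AffineMap.hasDerivAt_lineMap
  have hslope := (hf.comp_affineMap φ).le_slope_of_hasDerivAt (by simpa [hφ0] using hu)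
    (by simpa [hφ1] using hz) zero_lt_one hderiv
  rw [slope_def_field] at hslope
  simp only [Function.comp_apply, hφ0, hφ1, sub_zero, div_one] at hslope
  linarith

end FirstOrder

section InnerProduct

variable {E : Type*} [NormedAddCommGroup E] [InnerProductSpace ℝ E]

theorem ConvexOn.sub_le_inner_of_hasGradientAt [CompleteSpace E] {C : Set E} {f : E → ℝ}
    {G u z : E} (hf : ConvexOn ℝ C f) (hu : u ∈ C) (hz : z ∈ C) (hG : HasGradientAt f G u) :
    f u - f z ≤ ⟪G, u - z⟫ := by
  have := hf.add_fderiv_sub_le hu hz hG.hasFDerivAt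
  rw [InnerProductSpace.toDual_apply_apply, ← neg_sub, inner_neg_right] at this
  linarith

theorem Convex.norm_sub_le_of_forall_norm_sub_le {C : Set E} (hC : Convex ℝ C) {v p y : E}
    (hp : p ∈ C) (hmin : ∀ w ∈ C, ‖v - p‖ ≤ ‖v - w‖) (hy : y ∈ C) :
    ‖p - y‖ ≤ ‖v - y‖ := by
  have : Nonempty C := ⟨⟨p, hp⟩⟩
  have hinf : ‖v - p‖ = ⨅ w : C, ‖v - w‖ :=
    le_antisymm (le_ciInf fun w ↦ hmin w w.2)
      (ciInf_le ⟨0, by rintro _ ⟨w, rfl⟩; exact norm_nonneg (v - w)⟩ (⟨p, hp⟩ : C))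
  have hvar : ⟪v - p, y - p⟫ ≤ 0 := (norm_eq_iInf_iff_real_inner_le_zero hC hp).1 hinf y hy
  have hsq : ‖v - y‖ ^ 2 = ‖v - p‖ ^ 2 - 2 * ⟪v - p, y - p⟫ + ‖p - y‖ ^ 2 := by
    rw [← norm_sub_rev y p, ← norm_sub_sq_real]
    congr 2
    abel
  exact pow_le_pow_iff_left₀ (norm_nonneg _) (norm_nonneg _) two_ne_zero |>.1
    (by nlinarith [sq_nonneg ‖v - p‖])

theorem ConvexOn.sub_le_of_projected_gradient_step [CompleteSpace E] {C : Set E} {f : E → ℝ}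
    {G u z p : E} {s : ℝ} (hC : Convex ℝ C) (hf : ConvexOn ℝ C f) (hu : u ∈ C) (hz : z ∈ C)
    (hG : HasGradientAt f G u) (hs : 0 < s) (hp : p ∈ C)
    (hmin : ∀ w ∈ C, ‖u - (1 / s) • G - p‖ ≤ ‖u - (1 / s) • G - w‖) :
    f u - f z ≤ s / 2 * (‖u - z‖ ^ 2 - ‖p - z‖ ^ 2) + ‖G‖ ^ 2 / (2 * s) := by
  have hproj : ‖p - z‖ ≤ ‖u - (1 / s) • G - z‖ :=
    hC.norm_sub_le_of_forall_norm_sub_le hp hmin hz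
  have hexpand : ‖u - (1 / s) • G - z‖ ^ 2
      = ‖u - z‖ ^ 2 - 2 / s * ⟪G, u - z⟫ + ‖G‖ ^ 2 / s ^ 2 := by
    rw [sub_right_comm, norm_sub_sq_real, real_inner_smul_right, norm_smul, real_inner_comm G,
      Real.norm_of_nonneg (by positivity)]
    ring
  have hdescent : ⟪G, u - z⟫ ≤ s / 2 * (‖u - z‖ ^ 2 - ‖p - z‖ ^ 2) + ‖G‖ ^ 2 / (2 * s) := by
    have := pow_le_pow_left₀ (norm_nonneg _) hproj 2
    rw [hexpand] at this
    have := mul_le_mul_of_nonneg_left this (by positivity : 0 ≤ s / 2)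
    field_simp at this ⊢
    nlinarith
  linarith [hf.sub_le_inner_of_hasGradientAt hu hz hG]

end InnerProduct

theorem sum_Icc_mul_sub_succ_le {a d : ℕ → ℝ} {D : ℝ} (ha : Monotone a) (ha₀ : 0 ≤ a 0)
    (hd : ∀ t, 0 ≤ d t) (hdD : ∀ t, 1 ≤ t → d t ≤ D) (T : ℕ) :
    ∑ t ∈ Icc 1 T, a t * (d t - d (t + 1)) ≤ a T * D := by
  suffices ∑ t ∈ Icc 1 T, a t * (d t - d (t + 1)) ≤ a T * D - a T * d (T + 1) by
    nlinarith [hd (T + 1), ha (Nat.zero_le T)]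
  induction T with
  | zero => simpa using mul_le_mul_of_nonneg_left (hdD 1 le_rfl) ha₀
  | succ T ih =>
    rw [sum_Icc_succ_top (by omega)]
    nlinarith [mul_le_mul_of_nonneg_left (hdD (T + 1) (by omega))
      (sub_nonneg.2 (ha T.le_succ))]

theorem one_div_sqrt_succ_le (s : ℝ) (hs : 0 ≤ s) :
    1 / √(s + 1) ≤ 2 * (√(s + 1) - √s) := by
  have h₁ : √s ≤ √(s + 1) := Real.sqrt_le_sqrt (by linarith)
  have h₂ : 0 < √(s + 1) := Real.sqrt_pos.2 (by linarith)
  rw [div_le_iff₀ h₂]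
  nlinarith [Real.sq_sqrt hs, Real.sq_sqrt (by linarith : 0 ≤ s + 1), sq_nonneg (√(s + 1) - √s)]

theorem sum_Icc_one_div_sqrt_le (T : ℕ) : ∑ t ∈ Icc 1 T, 1 / √t ≤ 2 * √T := by
  induction T with
  | zero => simp
  | succ T ih =>
    rw [sum_Icc_succ_top (by omega)]
    have := one_div_sqrt_succ_le T T.cast_nonneg
    push_cast
    linarith

theorem sum_Icc_le_mul_sqrt_of_forall_le {r d : ℕ → ℝ} {c D : ℝ} (hc : 0 ≤ c)
    (hd : ∀ t, 0 ≤ d t) (hdD : ∀ t, 1 ≤ t → d t ≤ D)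
    (hr : ∀ t, 1 ≤ t → r t ≤ √t / 2 * (d t - d (t + 1)) + c / (2 * √t)) (T : ℕ) :
    ∑ t ∈ Icc 1 T, r t ≤ (D / 2 + c) * √T := by
  have hsqrt_mono : Monotone fun t : ℕ ↦ √t / 2 := fun s t hst ↦ by
    dsimp only
    gcongr
  calc ∑ t ∈ Icc 1 T, r t
      ≤ (∑ t ∈ Icc 1 T, √t / 2 * (d t - d (t + 1))) + c / 2 * ∑ t ∈ Icc 1 T, 1 / √t := by
        rw [mul_sum, ← sum_add_distrib]
        refine sum_le_sum fun t ht ↦ (hr t (mem_Icc.1 ht).1).trans_eq ?_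
        ring
    _ ≤ √T / 2 * D + c / 2 * (2 * √T) := by
      gcongr
      · exact sum_Icc_mul_sub_succ_le hsqrt_mono (by simp) hd hdD T
      · exact sum_Icc_one_div_sqrt_le T
    _ = (D / 2 + c) * √T := by ring

theorem stmt_7_general {K : ℕ} (C : Set (EuclideanSpace ℝ (Fin K)))
    (hconv : Convex ℝ C)
    (F H : ℝ)
    (hF : ∀ x ∈ C, ∀ y ∈ C, ‖x - y‖ ≤ F)
    (h : ℕ → EuclideanSpace ℝ (Fin K) → ℝ)
    (g : ℕ → EuclideanSpace ℝ (Fin K) → EuclideanSpace ℝ (Fin K))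
    (hconvex : ∀ t, ConvexOn ℝ C (h t))
    (hgrad : ∀ t, ∀ x ∈ C, HasGradientAt (h t) (g t x) x)
    (hH : ∀ t, ∀ x ∈ C, ‖g t x‖ ≤ H)
    (proj : EuclideanSpace ℝ (Fin K) → EuclideanSpace ℝ (Fin K))
    (hproj : ∀ z, proj z ∈ C ∧ ∀ y ∈ C, ‖z - proj z‖ ≤ ‖z - y‖)
    (x : ℕ → EuclideanSpace ℝ (Fin K)) (hx1 : x 1 ∈ C)
    (hxt : ∀ t : ℕ, 2 ≤ t →
      x t = proj (x (t - 1) - (1 / Real.sqrt (t - 1 : ℕ)) • g (t - 1) (x (t - 1)))) :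
    ∀ T : ℕ, ∀ z ∈ C,
      ∑ t ∈ Finset.Icc 1 T, h t (x t) - ∑ t ∈ Finset.Icc 1 T, h t z ≤
        (F ^ 2 / 2 + H ^ 2) * Real.sqrt T := by
  intro T z hz
  have hxC : ∀ t, 1 ≤ t → x t ∈ C := by
    rintro (_ | _ | t) ht
    exacts [absurd ht (by omega), hx1, hxt (t + 2) (by omega) ▸ (hproj _).1]
  rw [← sum_sub_distrib]
  refine sum_Icc_le_mul_sqrt_of_forall_le (sq_nonneg H) (fun _ ↦ sq_nonneg _)
    (fun t ht ↦ pow_le_pow_left₀ (norm_nonneg _) (hF _ (hxC t ht) z hz) 2) (fun t ht ↦ ?_) T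
  have hxt₁ := hxt (t + 1) (by omega)
  simp only [Nat.add_sub_cancel] at hxt₁
  have hs : (0 : ℝ) < √t := Real.sqrt_pos.2 (by exact_mod_cast ht)
  calc h t (x t) - h t z
      ≤ √t / 2 * (‖x t - z‖ ^ 2 - ‖x (t + 1) - z‖ ^ 2) + ‖g t (x t)‖ ^ 2 / (2 * √t) :=
        (hconvex t).sub_le_of_projected_gradient_step hconv (hxC t ht) hz
          (hgrad t _ (hxC t ht)) hs (hxt₁ ▸ (hproj _).1) (hxt₁ ▸ (hproj _).2)
    _ ≤ √t / 2 * (‖x t - z‖ ^ 2 - ‖x (t + 1) - z‖ ^ 2) + H ^ 2 / (2 * √t) := by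
      gcongr
      exact hH t _ (hxC t ht)

/-- Zinkevich's online projected gradient descent regret bound: with diameter `F`,
gradient bound `H` and step sizes `1/√t`, the regret after `T` rounds is at most
`(F²/2 + H²)√T`. -/
theorem stmt_7 {K : ℕ} (C : Set (EuclideanSpace ℝ (Fin K)))
    (hne : C.Nonempty) (hclosed : IsClosed C) (hconv : Convex ℝ C)
    (F H : ℝ)
    (hF : ∀ x ∈ C, ∀ y ∈ C, ‖x - y‖ ≤ F)
    (h : ℕ → EuclideanSpace ℝ (Fin K) → ℝ)
    (g : ℕ → EuclideanSpace ℝ (Fin K) → EuclideanSpace ℝ (Fin K))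
    (hconvex : ∀ t, ConvexOn ℝ C (h t))
    (hgrad : ∀ t, ∀ x ∈ C, HasGradientAt (h t) (g t x) x)
    (hH : ∀ t, ∀ x ∈ C, ‖g t x‖ ≤ H)
    (proj : EuclideanSpace ℝ (Fin K) → EuclideanSpace ℝ (Fin K))
    (hproj : ∀ z, proj z ∈ C ∧ ∀ y ∈ C, ‖z - proj z‖ ≤ ‖z - y‖)
    (x : ℕ → EuclideanSpace ℝ (Fin K)) (hx1 : x 1 ∈ C)
    (hxt : ∀ t : ℕ, 2 ≤ t →
      x t = proj (x (t - 1) - (1 / Real.sqrt (t - 1 : ℕ)) • g (t - 1) (x (t - 1)))) :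
    ∀ T : ℕ, ∀ z ∈ C,
      ∑ t ∈ Finset.Icc 1 T, h t (x t) - ∑ t ∈ Finset.Icc 1 T, h t z ≤
        (F ^ 2 / 2 + H ^ 2) * Real.sqrt T :=
  stmt_7_general C hconv F H hF h g hconvex hgrad hH proj hproj x hx1 hxt
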